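/- Let β be a partition and let k be an integer at least the number of parts of β (i.e. k ≥ β'_1). Let λ be the partition (k, β'_1, β'_2, …) obtained by prepending k to the conjugate partition β'. Then q^{binom(|β|+1, 2)}·s_β(1, q, …, q^{k−1}) = f_{λ,|β|}(q); that is, up to the power shift q^{binom(|β|+1,2)}, the principal specialization s_β(1,q,…,q^{k−1}) of the Schur polynomial indexed by β equals the distribution of the major index over all standard Young tableaux of shape λ with the maximum possible number |β| of descents. -/

import Mathlib

/-!
Only entries outside the first row of `λ = (k, β')` can be descents, so a standard tableau of
shape `λ` has at most `|β|` descents, with equality exactly when every entry outside the first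
row lies strictly below its predecessor. In such a tableau the `k` first-row entries cut
`1, …, |λ|` into runs along which the rows strictly increase. Labelling the cell `(r + 1, c)` of
`λ` by the index of its run and moving the label to the cell `(c, r)` of `β` gives a semistandard
tableau `T` of shape `β` with entries below `k`. Conversely `T` determines the standard tableau:
it lists the cells of `λ` by increasing `(level, row, column)`, where `(0, c)` has level `2c + 1`
and a lower cell labelled `t` has level `2t + 2`. If the entry `i + 1` lies in run `t`, the
descent `i` counts the `t + 1` first-row entries and the entries outside the first row preceding
it, so summing over the `|β|` descents gives
`maj = Σ T + |β| + binom(|β|, 2) = Σ T + binom(|β| + 1, 2)`.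
-/

open Polynomial
open scoped Classical

noncomputable section

/-- The set of cells of the skew shape `outer \ inner`, where `outer` and `inner` are
lists of row lengths (rows and columns are 0-indexed): the cell `(r, c)` is present
iff `inner.getD r 0 ≤ c < outer.getD r 0`. -/
def skewCells (outer inner : List ℕ) : Finset (ℕ × ℕ) :=
  ((Finset.range outer.length) ×ˢ (Finset.range (outer.foldr max 0))).filter
    (fun p => inner.getD p.1 0 ≤ p.2 ∧ p.2 < outer.getD p.1 0)

/-- `pos` encodes a standard Young tableau of skew shape `outer \ inner`:
`pos k` is the cell containing the entry `k + 1`.  The conditions say that the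
entries are a bijective filling which increases left to right along rows and
top to bottom down columns. -/
def IsSYT (outer inner : List ℕ)
    (pos : Fin (skewCells outer inner).card → ↥(skewCells outer inner)) : Prop :=
  Function.Injective pos ∧
  (∀ a b, ((pos a : ℕ × ℕ)).1 = ((pos b : ℕ × ℕ)).1 →
      ((pos a : ℕ × ℕ)).2 < ((pos b : ℕ × ℕ)).2 → a < b) ∧
  (∀ a b, ((pos a : ℕ × ℕ)).2 = ((pos b : ℕ × ℕ)).2 →
      ((pos a : ℕ × ℕ)).1 < ((pos b : ℕ × ℕ)).1 → a < b)

/-- The finite set of standard Young tableaux of skew shape `outer \ inner`. -/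
def SYTs (outer inner : List ℕ) :
    Finset (Fin (skewCells outer inner).card → ↥(skewCells outer inner)) :=
  Finset.univ.filter (IsSYT outer inner)

/-- The descent set of the tableau `pos`: the values `v` such that `v + 1` lies in a
strictly lower row than `v` (entry `v` is at index `v - 1`, entry `v+1` at index `v`). -/
def desSet (outer inner : List ℕ)
    (pos : Fin (skewCells outer inner).card → ↥(skewCells outer inner)) : Finset ℕ :=
  (Finset.range (skewCells outer inner).card).filter
    (fun v => ∃ a b : Fin (skewCells outer inner).card,
      (a : ℕ) + 1 = v ∧ (b : ℕ) = v ∧ ((pos a : ℕ × ℕ)).1 < ((pos b : ℕ × ℕ)).1)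

/-- The major index of a tableau: the sum of its descents. -/
def majStat (outer inner : List ℕ)
    (pos : Fin (skewCells outer inner).card → ↥(skewCells outer inner)) : ℕ :=
  (desSet outer inner pos).sum id

/-- The number of descents of a tableau. -/
def desStat (outer inner : List ℕ)
    (pos : Fin (skewCells outer inner).card → ↥(skewCells outer inner)) : ℕ :=
  (desSet outer inner pos).card

/-- `f_{outer∖inner, i}(q) = Σ_{τ ∈ SYT(outer∖inner), des(τ) = i} q^{maj(τ)} ∈ ℤ[q]`. -/
def fSkew (outer inner : List ℕ) (i : ℕ) : Polynomial ℤ :=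
  ∑ pos ∈ (SYTs outer inner).filter (fun pos => desStat outer inner pos = i),
    X ^ majStat outer inner pos

/-- `f_{λ, i}(q)` for a straight (non-skew) shape `λ`. -/
def fPoly (lam : List ℕ) (i : ℕ) : Polynomial ℤ := fSkew lam [] i

/-- Gaussian binomial coefficients for natural arguments, via the q-Pascal recurrence
`[M+1, N+1]_q = [M, N+1]_q + q^(M-N) [M, N]_q`, with `[M, 0]_q = 1`, `[0, N+1]_q = 0`. -/
def qBinomAux : ℕ → ℕ → Polynomial ℤ
  | _, 0 => 1
  | 0, _ + 1 => 0
  | M + 1, N + 1 => qBinomAux M (N + 1) + X ^ (M - N) * qBinomAux M N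

/-- Gaussian binomial coefficient `[M choose N]_q ∈ ℤ[q]`, with the convention that
it is `0` unless `0 ≤ N ≤ M`. -/
def qBinom (M N : ℤ) : Polynomial ℤ :=
  if 0 ≤ N ∧ N ≤ M then qBinomAux M.toNat N.toNat else 0

/-- The conjugate partition of `μ` (as a list of row lengths): part `j` (0-indexed)
is the number of parts of `μ` exceeding `j`. -/
def conj (mu : List ℕ) : List ℕ :=
  (List.range (mu.headD 0)).map (fun j => (mu.filter (fun x => j < x)).length)

/-- The principal specialization `s_μ(1, q, q², …, q^{m-1})` of the Schur polynomial:
the sum over semistandard Young tableaux of shape `μ` with entries in `{1,…,m}`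
(here 0-indexed as `Fin m`, an entry `e` contributing weight `q^e`, i.e. `x_i = q^{i-1}`)
of `q^{Σ_cells (entry - 1)}`.  Rows weakly increase and columns strictly increase. -/
def schurSpec (mu : List ℕ) (m : ℕ) : Polynomial ℤ :=
  ∑ T ∈ Finset.univ.filter
      (fun T : (↥(skewCells mu []) → Fin m) =>
        (∀ p q : ↥(skewCells mu []), ((p : ℕ × ℕ)).1 = ((q : ℕ × ℕ)).1 →
            ((p : ℕ × ℕ)).2 ≤ ((q : ℕ × ℕ)).2 → T p ≤ T q) ∧
        (∀ p q : ↥(skewCells mu []), ((p : ℕ × ℕ)).2 = ((q : ℕ × ℕ)).2 →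
            ((p : ℕ × ℕ)).1 < ((q : ℕ × ℕ)).1 → T p < T q)),
    X ^ (∑ p : ↥(skewCells mu []), ((T p : ℕ)))

open Finset Function

section SortedEnum

variable {α β : Type*} [Nonempty α] [LinearOrder β] (s : Finset α) {f : α → β}
  (hf : Injective f)

def sortedEnum (i : Fin s.card) : s :=
  ⟨invFun f ((s.image f).orderEmbOfFin (s.card_image_of_injective hf) i), by
    obtain ⟨a, ha, hfa⟩ := mem_image.mp ((s.image f).orderEmbOfFin_mem _ i)
    rw [← hfa, leftInverse_invFun hf a]
    exact ha⟩

theorem apply_sortedEnum (i : Fin s.card) :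
    f (sortedEnum s hf i) = (s.image f).orderEmbOfFin (s.card_image_of_injective hf) i := by
  obtain ⟨a, -, hfa⟩ :=
    mem_image.mp ((s.image f).orderEmbOfFin_mem (s.card_image_of_injective hf) i)
  simp only [sortedEnum, ← hfa, leftInverse_invFun hf a]

theorem strictMono_sortedEnum : StrictMono fun i => f (sortedEnum s hf i) := by
  simpa only [apply_sortedEnum] using ((s.image f).orderEmbOfFin _).strictMono

theorem bijective_sortedEnum : Bijective (sortedEnum s hf) := by
  rw [Fintype.bijective_iff_injective_and_card, Fintype.card_coe, Fintype.card_fin]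
  exact ⟨fun i j h => (strictMono_sortedEnum s hf).injective (congrArg (f ∘ Subtype.val) h),
    rfl⟩

theorem sortedEnum_not_between {a b : Fin s.card} (hab : (a : ℕ) + 1 = b) (x : s) :
    ¬ (f (sortedEnum s hf a) < f x ∧ f x < f (sortedEnum s hf b)) := by
  obtain ⟨i, rfl⟩ := (bijective_sortedEnum s hf).2 x
  simp only [(strictMono_sortedEnum s hf).lt_iff_lt, Fin.lt_def]
  omega

theorem eq_sortedEnum {e : Fin s.card → s} (he : StrictMono fun i => f (e i)) :
    e = sortedEnum s hf := by
  have := orderEmbOfFin_unique (s.card_image_of_injective hf)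
    (fun i => mem_image_of_mem f (e i).2) he
  funext i
  exact Subtype.ext (hf (by rw [apply_sortedEnum s hf, ← this]))

end SortedEnum

theorem sum_card_filter_lt {α : Type*} [LinearOrder α] (s : Finset α) :
    ∑ x ∈ s, #{y ∈ s | y < x} = s.card.choose 2 := by
  induction s using Finset.induction_on_max with
  | empty => simp
  | insert a s ha ih =>
    have hnot : a ∉ s := fun h => lt_irrefl a (ha a h)
    have hbelow : {y ∈ insert a s | y < a} = s := by
      ext y
      simp only [mem_filter, mem_insert]
      exact ⟨fun ⟨h, hy⟩ => h.resolve_left (ne_of_lt hy), fun h => ⟨Or.inr h, ha y h⟩⟩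
    have hrest : ∀ x ∈ s, #{y ∈ insert a s | y < x} = #{y ∈ s | y < x} := fun x hx => by
      rw [filter_insert, if_neg (lt_asymm (ha x hx))]
    rw [sum_insert hnot, hbelow, sum_congr rfl hrest, ih, card_insert_of_notMem hnot,
      Nat.choose_succ_succ', Nat.choose_one_right, add_comm]

section StraightShape

variable {outer : List ℕ}

abbrev Filling (outer : List ℕ) : Type :=
  Fin (skewCells outer []).card → ↥(skewCells outer [])

theorem mem_skewCells_nil {p : ℕ × ℕ} :
    p ∈ skewCells outer [] ↔ p.1 < outer.length ∧ p.2 < outer.getD p.1 0 := by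
  simp only [skewCells, mem_filter, mem_product, mem_range, List.getD_nil, zero_le, true_and]
  refine ⟨fun h => ⟨h.1.1, h.2⟩,
    fun h => ⟨⟨h.1, h.2.trans_le (List.le_max_of_le' 0 ?_ le_rfl)⟩, h.2⟩⟩
  rw [List.getD_eq_getElem _ _ h.1]
  exact List.getElem_mem _

theorem mem_skewCells_nil_of_le (hsort : outer.Pairwise (· ≥ ·)) {i j i' j' : ℕ}
    (h : (i, j) ∈ skewCells outer []) (hi : i' ≤ i) (hj : j' ≤ j) :
    (i', j') ∈ skewCells outer [] := by
  rw [mem_skewCells_nil] at h ⊢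
  obtain ⟨hlen, hj'⟩ := h
  refine ⟨hi.trans_lt hlen, hj.trans_lt (hj'.trans_le ?_)⟩
  rw [List.getD_eq_getElem _ _ hlen, List.getD_eq_getElem _ _ (hi.trans_lt hlen)]
  rcases hi.lt_or_eq with hlt | rfl
  · exact List.pairwise_iff_getElem.mp hsort _ _ _ _ hlt
  · exact le_rfl

theorem filter_fst_eq_skewCells_nil (r : ℕ) :
    (skewCells outer []).filter (·.1 = r) =
      (range (outer.getD r 0)).map (Embedding.sectR r ℕ) := by
  ext ⟨r', c⟩
  simp only [mem_filter, mem_skewCells_nil, mem_map, mem_range, Embedding.sectR_apply,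
    Prod.mk.injEq]
  constructor
  · rintro ⟨⟨-, hc⟩, rfl⟩
    exact ⟨c, hc, rfl, rfl⟩
  · rintro ⟨c, hc, rfl, rfl⟩
    refine ⟨⟨?_, hc⟩, rfl⟩
    by_contra hr
    rw [List.getD_eq_default _ _ (not_lt.mp hr)] at hc
    exact Nat.not_lt_zero _ hc

theorem card_skewCells_nil : (skewCells outer []).card = outer.sum := by
  rw [card_eq_sum_card_fiberwise (f := Prod.fst) (t := range outer.length)
    (fun p hp => mem_range.mpr (mem_skewCells_nil.mp hp).1), sum_range, ← Fin.sum_univ_getElem]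
  refine sum_congr rfl fun r _ => ?_
  rw [filter_fst_eq_skewCells_nil, card_map, card_range, List.getD_eq_getElem _ _ r.2]

variable {pos : Filling outer}

theorem IsSYT.bijective (h : IsSYT outer [] pos) : Bijective pos := by
  rw [Fintype.bijective_iff_injective_and_card, Fintype.card_coe, Fintype.card_fin]
  exact ⟨h.1, rfl⟩

theorem sum_filter_comp_eq {M : Type*} [AddCommMonoid M] (hpos : Bijective pos)
    (P : ℕ × ℕ → Prop) [DecidablePred P] (g : ℕ × ℕ → M) :
    ∑ a with P (pos a), g (pos a) = ∑ q ∈ skewCells outer [] with P q, g q := by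
  refine sum_bij (fun a _ => (pos a).1) (fun a ha => ?_) (fun a _ b _ h => hpos.1 (Subtype.ext h))
    (fun q hq => ?_) (fun _ _ => rfl)
  · exact mem_filter.mpr ⟨(pos a).2, (mem_filter.mp ha).2⟩
  · obtain ⟨hqC, hqP⟩ := mem_filter.mp hq
    obtain ⟨a, ha⟩ := hpos.2 ⟨q, hqC⟩
    exact ⟨a, mem_filter.mpr ⟨mem_univ a, by rwa [ha]⟩, by rw [ha]⟩

theorem card_filter_comp_eq (hpos : Bijective pos) (P : ℕ × ℕ → Prop) [DecidablePred P] :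
    #{a | P (pos a)} = #{q ∈ skewCells outer [] | P q} := by
  simpa only [card_eq_sum_ones] using sum_filter_comp_eq hpos P (fun _ => 1)

theorem IsSYT.lt_iff_col_lt (h : IsSYT outer [] pos) {a b : Fin (skewCells outer []).card}
    (hrow : (pos a).1.1 = (pos b).1.1) : a < b ↔ (pos a).1.2 < (pos b).1.2 := by
  refine ⟨fun hab => ?_, h.2.1 a b hrow⟩
  rcases lt_trichotomy (pos a).1.2 (pos b).1.2 with hc | hc | hc
  · exact hc
  · exact absurd (h.1 (Subtype.ext (Prod.ext hrow hc))) hab.ne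
  · exact absurd (h.2.1 b a hrow.symm hc) hab.not_gt

def rowCountBefore (pos : Filling outer) (r : ℕ) (b : Fin (skewCells outer []).card) : ℕ :=
  #{a | a < b ∧ (pos a).1.1 = r}

theorem rowCountBefore_mono (r : ℕ) : Monotone (rowCountBefore pos r) :=
  fun _ _ hab => card_le_card fun _ ha => by
    simp only [mem_filter, mem_univ, true_and] at ha ⊢
    exact ⟨ha.1.trans_le hab, ha.2⟩

theorem rowCountBefore_lt_of_le_of_lt {r : ℕ} {a b c : Fin (skewCells outer []).card}
    (hc : (pos c).1.1 = r) (hac : a ≤ c) (hcb : c < b) :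
    rowCountBefore pos r a < rowCountBefore pos r b := by
  refine card_lt_card ((ssubset_iff_of_subset fun x hx => ?_).mpr ⟨c, ?_, ?_⟩)
  · simp only [mem_filter, mem_univ, true_and] at hx ⊢
    exact ⟨hx.1.trans (hac.trans_lt hcb), hx.2⟩
  · simp [hc, hcb]
  · simp [hac]

theorem rowCountBefore_le (hpos : Bijective pos) (r : ℕ) (b : Fin (skewCells outer []).card) :
    rowCountBefore pos r b ≤ #{q ∈ skewCells outer [] | q.1 = r} := by
  rw [← card_filter_comp_eq hpos]
  exact card_le_card fun a ha => by simp only [mem_filter, mem_univ, true_and] at ha ⊢; exact ha.2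

theorem IsSYT.rowCountBefore_eq_col (h : IsSYT outer [] pos) (b : Fin (skewCells outer []).card) :
    rowCountBefore pos (pos b).1.1 b = (pos b).1.2 := by
  have hcol : (pos b).1.2 ≤ outer.getD (pos b).1.1 0 := (mem_skewCells_nil.mp (pos b).2).2.le
  calc rowCountBefore pos (pos b).1.1 b
      = #{a | (pos a).1.1 = (pos b).1.1 ∧ (pos a).1.2 < (pos b).1.2} := by
        refine congrArg card (filter_congr fun a _ => ?_)
        by_cases hrow : (pos a).1.1 = (pos b).1.1
        · simp [hrow, h.lt_iff_col_lt hrow]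
        · simp [hrow]
    _ = #{q ∈ skewCells outer [] | q.1 = (pos b).1.1 ∧ q.2 < (pos b).1.2} :=
        card_filter_comp_eq h.bijective (fun q => q.1 = (pos b).1.1 ∧ q.2 < (pos b).1.2)
    _ = (pos b).1.2 := by
        rw [← filter_filter, filter_fst_eq_skewCells_nil, filter_map, card_map]
        convert card_range (pos b).1.2 using 2
        ext c
        simp only [mem_filter, mem_range, comp_apply, Embedding.sectR_apply]
        omega

theorem val_eq_rowCountBefore_add (b : Fin (skewCells outer []).card) :
    (b : ℕ) = rowCountBefore pos 0 b + #{a | a < b ∧ (pos a).1.1 ≠ 0} := by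
  rw [rowCountBefore, ← filter_filter, ← filter_filter, card_filter_add_card_filter_not,
    filter_gt_eq_Iio, Fin.card_Iio]

def IsMaxDescent (pos : Filling outer) : Prop :=
  ∀ b, (pos b).1.1 ≠ 0 →
    ∃ a : Fin (skewCells outer []).card, (a : ℕ) + 1 = b ∧ (pos a).1.1 < (pos b).1.1

theorem mem_desSet_iff {v : ℕ} : v ∈ desSet outer [] pos ↔
    ∃ a b : Fin (skewCells outer []).card, (a : ℕ) + 1 = v ∧ (b : ℕ) = v ∧
      (pos a).1.1 < (pos b).1.1 := by
  simp only [desSet, mem_filter, mem_range, and_iff_right_iff_imp]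
  rintro ⟨-, b, -, rfl, -⟩
  exact b.2

theorem desSet_subset_image :
    desSet outer [] pos ⊆ (({b | (pos b).1.1 ≠ 0} : Finset _).image Fin.val) := by
  intro v hv
  obtain ⟨a, b, -, rfl, hab⟩ := mem_desSet_iff.mp hv
  exact mem_image_of_mem _ (mem_filter.mpr ⟨mem_univ b, (Nat.zero_le _).trans_lt hab |>.ne'⟩)

theorem IsMaxDescent.desSet_eq (h : IsMaxDescent pos) :
    desSet outer [] pos = ({b | (pos b).1.1 ≠ 0} : Finset _).image Fin.val := by
  refine desSet_subset_image.antisymm fun v hv => ?_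
  obtain ⟨b, hb, rfl⟩ := mem_image.mp hv
  obtain ⟨a, hab, hrow⟩ := h b (mem_filter.mp hb).2
  exact mem_desSet_iff.mpr ⟨a, b, hab, rfl, hrow⟩

theorem desStat_eq_iff : desStat outer [] pos = #{b | (pos b).1.1 ≠ 0} ↔ IsMaxDescent pos := by
  have hcard := card_image_of_injective ({b | (pos b).1.1 ≠ 0} : Finset _) Fin.val_injective
  refine ⟨fun hdes b hb => ?_, fun h => by rw [desStat, h.desSet_eq, hcard]⟩
  have heq := eq_of_subset_of_card_le desSet_subset_image (by rw [hcard, ← hdes]; rfl)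
  obtain ⟨a, b', hab, hb', hrow⟩ :=
    mem_desSet_iff.mp (heq ▸ mem_image_of_mem Fin.val (mem_filter.mpr ⟨mem_univ b, hb⟩))
  obtain rfl := Fin.ext hb'
  exact ⟨a, hab, hrow⟩

theorem IsMaxDescent.majStat_eq (h : IsMaxDescent pos) :
    majStat outer [] pos = ∑ b with (pos b).1.1 ≠ 0, (b : ℕ) := by
  rw [majStat, h.desSet_eq, sum_image fun _ _ _ _ => Fin.ext]
  rfl

theorem IsMaxDescent.row_lt (h : IsMaxDescent pos) {a b : Fin (skewCells outer []).card}
    (hab : a < b) (hmid : ∀ c, a < c → c ≤ b → (pos c).1.1 ≠ 0) :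
    (pos a).1.1 < (pos b).1.1 := by
  obtain ⟨m, hm⟩ : ∃ m, (b : ℕ) = m := ⟨_, rfl⟩
  induction m generalizing b with
  | zero => exact absurd hab (by rw [Fin.lt_def]; omega)
  | succ m ih =>
    obtain ⟨b', hb', hrow⟩ := h b (hmid b hab le_rfl)
    have hb'b : b' < b := by rw [Fin.lt_def]; omega
    rcases eq_or_lt_of_le (show a ≤ b' by rw [Fin.le_def]; rw [Fin.lt_def] at hab; omega)
      with rfl | hab'
    · exact hrow
    · exact (ih hab' (fun c hac hcb => hmid c hac (hcb.trans hb'b.le)) (by omega)).trans hrow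

theorem IsMaxDescent.row_lt_of_rowCountBefore_eq (h : IsMaxDescent pos)
    {a b : Fin (skewCells outer []).card} (hab : a < b) (hb : (pos b).1.1 ≠ 0)
    (hcount : rowCountBefore pos 0 a = rowCountBefore pos 0 b) : (pos a).1.1 < (pos b).1.1 :=
  h.row_lt hab fun c hac hcb => by
    rcases hcb.lt_or_eq with hcb | rfl
    · exact fun hc => (rowCountBefore_lt_of_le_of_lt hc hac.le hcb).ne hcount
    · exact hb

theorem IsMaxDescent.one_le_rowCountBefore (h : IsMaxDescent pos)
    {b : Fin (skewCells outer []).card} (hb : (pos b).1.1 ≠ 0) :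
    1 ≤ rowCountBefore pos 0 b := by
  obtain ⟨a, hab, -⟩ := h b hb
  let z : Fin (skewCells outer []).card := ⟨0, by omega⟩
  have hz : (pos z).1.1 = 0 := by
    by_contra hz
    obtain ⟨a', ha', -⟩ := h z hz
    simp [z] at ha'
  exact Nat.one_le_of_lt
    (rowCountBefore_lt_of_le_of_lt hz le_rfl (by rw [Fin.lt_def]; simp [z]; omega))

end StraightShape

section Lambda

variable {beta : List ℕ} {k : ℕ}

theorem lt_length_filter_iff (hsort : beta.Pairwise (· ≥ ·)) (r c : ℕ) :
    c < (beta.filter (r < ·)).length ↔ c < beta.length ∧ r < beta.getD c 0 := by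
  induction beta generalizing c with
  | nil => simp
  | cons x xs ih =>
    obtain ⟨hx, hxs⟩ := List.pairwise_cons.mp hsort
    by_cases hrx : r < x
    · rw [List.filter_cons_of_pos (by simpa using hrx)]
      cases c with
      | zero => simpa using hrx
      | succ c => simpa using ih hxs c
    · have hnil : xs.filter (r < ·) = [] :=
        List.filter_eq_nil_iff.mpr fun y hy => by simpa using (hx y hy).trans (not_lt.mp hrx)
      rw [List.filter_cons_of_neg (by simpa using hrx), hnil]
      simp only [List.length_nil, Nat.not_lt_zero, false_iff, not_and, not_lt]
      intro hc
      cases c with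
      | zero => simpa using hrx
      | succ c =>
        simp only [List.getD_cons_succ]
        rw [List.getD_eq_getElem _ _ (by simpa using hc)]
        exact (hx _ (List.getElem_mem _)).trans (not_lt.mp hrx)

theorem le_headD_of_mem (hsort : beta.Pairwise (· ≥ ·)) {x : ℕ} (hx : x ∈ beta) :
    x ≤ beta.headD 0 := by
  cases beta with
  | nil => cases hx
  | cons y ys =>
    rcases List.mem_cons.mp hx with rfl | hx
    · exact le_rfl
    · exact (List.pairwise_cons.mp hsort).1 x hx

theorem mem_lam_zero {c : ℕ} :
    ((0, c) : ℕ × ℕ) ∈ skewCells (k :: conj beta) [] ↔ c < k := by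
  simp [mem_skewCells_nil]

theorem mem_lam_succ (hsort : beta.Pairwise (· ≥ ·)) {r c : ℕ} :
    ((r + 1, c) : ℕ × ℕ) ∈ skewCells (k :: conj beta) [] ↔
      ((c, r) : ℕ × ℕ) ∈ skewCells beta [] := by
  rw [mem_skewCells_nil, mem_skewCells_nil, ← lt_length_filter_iff hsort]
  simp only [conj, List.length_cons, List.length_map, List.length_range, List.getD_cons_succ,
    add_lt_add_iff_right]
  constructor
  · rintro ⟨hr, hc⟩
    rwa [List.getD_eq_getElem _ _ (by simpa using hr), List.getElem_map, List.getElem_range] at hc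
  · intro hc
    have hr : r < beta.headD 0 := by
      obtain ⟨hmem, hlt⟩ := List.mem_filter.mp (List.getElem_mem hc)
      exact (of_decide_eq_true hlt).trans_le (le_headD_of_mem hsort hmem)
    refine ⟨hr, ?_⟩
    rwa [List.getD_eq_getElem _ _ (by simpa using hr), List.getElem_map, List.getElem_range]

def succTranspose : ℕ × ℕ ↪ ℕ × ℕ :=
  ⟨fun p => (p.2 + 1, p.1), fun p q h => by
    simp only [Prod.mk.injEq] at h
    exact Prod.ext h.2 (by omega)⟩

@[simp]
theorem succTranspose_apply (p : ℕ × ℕ) : succTranspose p = (p.2 + 1, p.1) := rfl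

theorem succTranspose_mem (hsort : beta.Pairwise (· ≥ ·)) (p : ↥(skewCells beta [])) :
    succTranspose p ∈ skewCells (k :: conj beta) [] :=
  (mem_lam_succ hsort).mpr p.2

theorem mem_of_mem_lam (hsort : beta.Pairwise (· ≥ ·)) {q : ℕ × ℕ}
    (hq : q ∈ skewCells (k :: conj beta) []) (h0 : q.1 ≠ 0) :
    (q.2, q.1 - 1) ∈ skewCells beta [] := by
  obtain ⟨_ | r, c⟩ := q
  · exact absurd rfl h0
  · exact (mem_lam_succ hsort).mp hq

theorem filter_lam_fst_ne_zero (hsort : beta.Pairwise (· ≥ ·)) :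
    (skewCells (k :: conj beta) []).filter (·.1 ≠ 0) =
      (skewCells beta []).map succTranspose := by
  ext ⟨_ | r, c⟩
  · simp
  · simp [mem_lam_succ hsort, and_comm]

theorem card_filter_lam_fst_eq_zero :
    #{q ∈ skewCells (k :: conj beta) [] | q.1 = 0} = k := by
  rw [filter_fst_eq_skewCells_nil, card_map, card_range, List.getD_cons_zero]

theorem card_filter_lam_fst_ne_zero (hsort : beta.Pairwise (· ≥ ·)) :
    #{q ∈ skewCells (k :: conj beta) [] | q.1 ≠ 0} = beta.sum := by
  rw [filter_lam_fst_ne_zero hsort, card_map, card_skewCells_nil]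

theorem desStat_eq_sum_iff {pos : Filling (k :: conj beta)} (hsort : beta.Pairwise (· ≥ ·))
    (hsyt : IsSYT (k :: conj beta) [] pos) :
    desStat (k :: conj beta) [] pos = beta.sum ↔ IsMaxDescent pos := by
  rw [← card_filter_lam_fst_ne_zero hsort,
    ← card_filter_comp_eq hsyt.bijective (fun q => q.1 ≠ 0), desStat_eq_iff]

def IsSSYT (T : ↥(skewCells beta []) → Fin k) : Prop :=
  (∀ p q : ↥(skewCells beta []), ((p : ℕ × ℕ)).1 = ((q : ℕ × ℕ)).1 →
      ((p : ℕ × ℕ)).2 ≤ ((q : ℕ × ℕ)).2 → T p ≤ T q) ∧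
  (∀ p q : ↥(skewCells beta []), ((p : ℕ × ℕ)).2 = ((q : ℕ × ℕ)).2 →
      ((p : ℕ × ℕ)).1 < ((q : ℕ × ℕ)).1 → T p < T q)

theorem IsSSYT.fst_le (hsort : beta.Pairwise (· ≥ ·)) {T : ↥(skewCells beta []) → Fin k}
    (hT : IsSSYT T) (p : ↥(skewCells beta [])) : (p : ℕ × ℕ).1 ≤ T p := by
  obtain ⟨⟨i, j⟩, hp⟩ := p
  induction i generalizing j with
  | zero => exact Nat.zero_le _
  | succ i ih =>
    have h0 : (i + 1, 0) ∈ skewCells beta [] :=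
      mem_skewCells_nil_of_le hsort hp le_rfl (Nat.zero_le _)
    have h0' : (i, 0) ∈ skewCells beta [] :=
      mem_skewCells_nil_of_le hsort hp (Nat.le_succ i) (Nat.zero_le _)
    calc i + 1 ≤ T ⟨(i, 0), h0'⟩ + 1 := Nat.add_le_add_right (ih 0 h0') 1
      _ ≤ T ⟨(i + 1, 0), h0⟩ := hT.2 _ _ rfl (Nat.lt_succ_self i)
      _ ≤ T ⟨(i + 1, j), hp⟩ := hT.1 _ _ rfl (Nat.zero_le j)

end Lambda

section Key

variable {beta : List ℕ} {k : ℕ} (T : ↥(skewCells beta []) → Fin k)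

def lamLabel (q : ℕ × ℕ) : ℕ :=
  if h : (q.2, q.1 - 1) ∈ skewCells beta [] then T ⟨_, h⟩ else 0

theorem lamLabel_succTranspose (p : ↥(skewCells beta [])) :
    lamLabel T (succTranspose p) = T p := by
  simp [lamLabel, p.2]

theorem lamLabel_eq (hsort : beta.Pairwise (· ≥ ·)) {q : ℕ × ℕ}
    (hq : q ∈ skewCells (k :: conj beta) []) (h0 : q.1 ≠ 0) :
    lamLabel T q = T ⟨_, mem_of_mem_lam hsort hq h0⟩ :=
  dif_pos _

theorem lamLabel_lt (hsort : beta.Pairwise (· ≥ ·)) {q : ℕ × ℕ}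
    (hq : q ∈ skewCells (k :: conj beta) []) (h0 : q.1 ≠ 0) : lamLabel T q < k := by
  rw [lamLabel_eq T hsort hq h0]
  exact Fin.isLt _

def level (q : ℕ × ℕ) : ℕ :=
  if q.1 = 0 then 2 * q.2 + 1 else 2 * lamLabel T q + 2

def key (q : ℕ × ℕ) : ℕ ×ₗ ℕ ×ₗ ℕ :=
  toLex (level T q, toLex q)

theorem key_injective : Injective (key T) :=
  fun _ _ h => toLex.injective (congrArg Prod.snd (toLex.injective h))

theorem key_lt_of_level_lt {q q' : ℕ × ℕ} (h : level T q < level T q') : key T q < key T q' :=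
  Prod.Lex.toLex_lt_toLex.mpr (Or.inl h)

theorem key_lt_key {q q' : ℕ × ℕ} (hle : level T q ≤ level T q') (hlt : toLex q < toLex q') :
    key T q < key T q' := by
  rcases hle.lt_or_eq with h | h
  · exact key_lt_of_level_lt T h
  · exact Prod.Lex.toLex_lt_toLex.mpr (Or.inr ⟨h, hlt⟩)

theorem level_le_of_key_lt {q q' : ℕ × ℕ} (h : key T q < key T q') :
    level T q ≤ level T q' := by
  rcases Prod.Lex.toLex_lt_toLex.mp h with h | ⟨h, -⟩
  · exact h.le
  · exact h.le

theorem key_zero_lt_iff {c : ℕ} {q : ℕ × ℕ} (hq : q.1 ≠ 0) :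
    key T (0, c) < key T q ↔ c ≤ lamLabel T q := by
  refine ⟨fun h => ?_, fun h => key_lt_key T ?_ ?_⟩
  · have := level_le_of_key_lt T h
    simp only [level, if_pos, if_neg hq] at this
    omega
  · simp only [level, if_pos, if_neg hq]
    omega
  · exact Prod.Lex.toLex_lt_toLex.mpr (Or.inl (Nat.pos_of_ne_zero hq))

def toSYT : Filling (k :: conj beta) :=
  sortedEnum (skewCells (k :: conj beta) []) (key_injective T)

theorem toSYT_lt_iff {a b : Fin (skewCells (k :: conj beta) []).card} :
    a < b ↔ key T (toSYT T a) < key T (toSYT T b) :=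
  (strictMono_sortedEnum _ (key_injective T)).lt_iff_lt.symm

end Key

section ToSYT

variable {beta : List ℕ} {k : ℕ} {T : ↥(skewCells beta []) → Fin k} {q q' : ℕ × ℕ}

theorem lamLabel_lt_of_fst_eq (hsort : beta.Pairwise (· ≥ ·)) (hT : IsSSYT T)
    (hq : q ∈ skewCells (k :: conj beta) []) (hq' : q' ∈ skewCells (k :: conj beta) [])
    (h0 : q.1 ≠ 0) (hrow : q.1 = q'.1) (hcol : q.2 < q'.2) :
    lamLabel T q < lamLabel T q' := by
  rw [lamLabel_eq T hsort hq h0, lamLabel_eq T hsort hq' (hrow ▸ h0)]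
  exact hT.2 _ _ (by simp [hrow]) hcol

theorem lamLabel_le_of_snd_eq (hsort : beta.Pairwise (· ≥ ·)) (hT : IsSSYT T)
    (hq : q ∈ skewCells (k :: conj beta) []) (hq' : q' ∈ skewCells (k :: conj beta) [])
    (h0 : q.1 ≠ 0) (hcol : q.2 = q'.2) (hrow : q.1 ≤ q'.1) :
    lamLabel T q ≤ lamLabel T q' := by
  have h0' : q'.1 ≠ 0 := by omega
  rw [lamLabel_eq T hsort hq h0, lamLabel_eq T hsort hq' h0']
  exact hT.1 _ _ hcol (by simp only; omega)

theorem snd_le_lamLabel (hsort : beta.Pairwise (· ≥ ·)) (hT : IsSSYT T)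
    (hq : q ∈ skewCells (k :: conj beta) []) (h0 : q.1 ≠ 0) : q.2 ≤ lamLabel T q := by
  rw [lamLabel_eq T hsort hq h0]
  exact hT.fst_le hsort ⟨_, mem_of_mem_lam hsort hq h0⟩

theorem key_lt_of_fst_eq (hsort : beta.Pairwise (· ≥ ·)) (hT : IsSSYT T)
    (hq : q ∈ skewCells (k :: conj beta) []) (hq' : q' ∈ skewCells (k :: conj beta) [])
    (hrow : q.1 = q'.1) (hcol : q.2 < q'.2) : key T q < key T q' := by
  refine key_lt_key T ?_ (Prod.Lex.toLex_lt_toLex.mpr (Or.inr ⟨hrow, hcol⟩))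
  by_cases h0 : q.1 = 0
  · simp only [level, if_pos h0, if_pos (hrow ▸ h0)]
    omega
  · simp only [level, if_neg h0, if_neg (hrow ▸ h0)]
    have := lamLabel_lt_of_fst_eq hsort hT hq hq' h0 hrow hcol
    omega

theorem key_lt_of_snd_eq (hsort : beta.Pairwise (· ≥ ·)) (hT : IsSSYT T)
    (hq : q ∈ skewCells (k :: conj beta) []) (hq' : q' ∈ skewCells (k :: conj beta) [])
    (hcol : q.2 = q'.2) (hrow : q.1 < q'.1) : key T q < key T q' := by
  refine key_lt_key T ?_ (Prod.Lex.toLex_lt_toLex.mpr (Or.inl hrow))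
  have h0' : q'.1 ≠ 0 := by omega
  by_cases h0 : q.1 = 0
  · simp only [level, if_pos h0, if_neg h0']
    have := snd_le_lamLabel hsort hT hq' h0'
    omega
  · simp only [level, if_neg h0, if_neg h0']
    have := lamLabel_le_of_snd_eq hsort hT hq hq' h0 hcol hrow.le
    omega

theorem isSYT_toSYT (hsort : beta.Pairwise (· ≥ ·)) (hT : IsSSYT T) :
    IsSYT (k :: conj beta) [] (toSYT T) :=
  ⟨(bijective_sortedEnum _ _).1,
    fun a b hrow hcol =>
      (toSYT_lt_iff T).mpr (key_lt_of_fst_eq hsort hT (toSYT T a).2 (toSYT T b).2 hrow hcol),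
    fun a b hcol hrow =>
      (toSYT_lt_iff T).mpr (key_lt_of_snd_eq hsort hT (toSYT T a).2 (toSYT T b).2 hcol hrow)⟩

theorem pos_of_toSYT_fst_ne_zero (hsort : beta.Pairwise (· ≥ ·)) (hk : beta.length ≤ k)
    {b : Fin (skewCells (k :: conj beta) []).card} (hb : (toSYT T b).1.1 ≠ 0) :
    0 < (b : ℕ) := by
  have hk0 : 0 < k := (Nat.zero_le _).trans_lt
    ((mem_skewCells_nil.mp (mem_of_mem_lam hsort (toSYT T b).2 hb)).1.trans_le hk)
  obtain ⟨i₀, hi₀⟩ :=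
    (bijective_sortedEnum _ (key_injective T)).2 ⟨(0, 0), mem_lam_zero.mpr hk0⟩
  have hi₀b : i₀ < b := (toSYT_lt_iff T).mpr (by
    rw [toSYT, hi₀]
    exact (key_zero_lt_iff T hb).mpr (Nat.zero_le _))
  exact (Nat.zero_le _).trans_lt hi₀b

theorem toSYT_fst_lt_of_succ_eq (hsort : beta.Pairwise (· ≥ ·)) (hT : IsSSYT T)
    {a b : Fin (skewCells (k :: conj beta) []).card} (hab : (a : ℕ) + 1 = b)
    (hb : (toSYT T b).1.1 ≠ 0) : (toSYT T a).1.1 < (toSYT T b).1.1 := by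
  have hkey : key T (toSYT T a) < key T (toSYT T b) :=
    (toSYT_lt_iff T).mp (by rw [Fin.lt_def]; omega)
  by_contra hge
  have ha : (toSYT T a).1.1 ≠ 0 := by omega
  have hlev := level_le_of_key_lt T hkey
  simp only [level, if_neg ha, if_neg hb] at hlev
  rcases hlev.lt_or_eq with hlt | heq
  · -- the first-row cell `(0, lamLabel T (toSYT T a) + 1)` would sit strictly between `a` and `b`
    have hlt : lamLabel T (toSYT T a) < lamLabel T (toSYT T b) := by omega
    have hmem : (0, lamLabel T (toSYT T a) + 1) ∈ skewCells (k :: conj beta) [] :=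
      mem_lam_zero.mpr ((Nat.succ_le_of_lt hlt).trans_lt (lamLabel_lt T hsort (toSYT T b).2 hb))
    refine sortedEnum_not_between _ (key_injective T) hab ⟨_, hmem⟩ ⟨?_, ?_⟩
    · show key T (toSYT T a) < key T (0, _)
      exact key_lt_of_level_lt T (by simp only [level, if_neg ha, if_pos]; omega)
    · exact (key_zero_lt_iff T hb).mpr hlt
  · rcases Prod.Lex.toLex_lt_toLex.mp hkey with h | ⟨-, h⟩
    · simp only [level, if_neg ha, if_neg hb] at h
      omega
    · rcases Prod.Lex.toLex_lt_toLex.mp h with h | ⟨hrow, hcol⟩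
      · exact hge h
      · have := lamLabel_lt_of_fst_eq hsort hT (toSYT T a).2 (toSYT T b).2 ha hrow hcol
        omega

theorem isMaxDescent_toSYT (hsort : beta.Pairwise (· ≥ ·)) (hk : beta.length ≤ k)
    (hT : IsSSYT T) : IsMaxDescent (toSYT T) := fun b hb =>
  have hb0 := pos_of_toSYT_fst_ne_zero hsort hk hb
  ⟨⟨b - 1, by omega⟩, by simp only; omega,
    toSYT_fst_lt_of_succ_eq hsort hT (by simp only; omega) hb⟩

theorem rowCountBefore_toSYT (hsort : beta.Pairwise (· ≥ ·))
    {b : Fin (skewCells (k :: conj beta) []).card} (hb : (toSYT T b).1.1 ≠ 0) :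
    rowCountBefore (toSYT T) 0 b = lamLabel T (toSYT T b) + 1 := by
  have ht := lamLabel_lt T hsort (toSYT T b).2 hb
  calc rowCountBefore (toSYT T) 0 b
      = #{a | (toSYT T a).1.1 = 0 ∧ key T (toSYT T a) < key T (toSYT T b)} := by
        refine congrArg card (filter_congr fun a _ => ?_)
        rw [toSYT_lt_iff T, and_comm]
    _ = #{q ∈ skewCells (k :: conj beta) [] | q.1 = 0 ∧ key T q < key T (toSYT T b)} :=
        card_filter_comp_eq (bijective_sortedEnum _ (key_injective T))
          (fun q => q.1 = 0 ∧ key T q < key T (toSYT T b))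
    _ = #{c ∈ range k | c ≤ lamLabel T (toSYT T b)} := by
        rw [← filter_filter, filter_fst_eq_skewCells_nil, filter_map, card_map,
          List.getD_cons_zero]
        refine congrArg card (filter_congr fun c _ => ?_)
        exact key_zero_lt_iff T hb
    _ = lamLabel T (toSYT T b) + 1 := by
        rw [← card_range (lamLabel T (toSYT T b) + 1)]
        congr 1
        ext c
        simp only [mem_filter, mem_range]
        omega

end ToSYT

section RunLabelling

variable {beta : List ℕ} {k : ℕ} {pos : Filling (k :: conj beta)}
  {T T' : ↥(skewCells beta []) → Fin k}

def IsRunLabelling (pos : Filling (k :: conj beta)) (T : ↥(skewCells beta []) → Fin k) : Prop :=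
  ∀ b, (pos b).1.1 ≠ 0 → rowCountBefore pos 0 b = lamLabel T (pos b) + 1

theorem isRunLabelling_toSYT (hsort : beta.Pairwise (· ≥ ·)) : IsRunLabelling (toSYT T) T :=
  fun _ hb => rowCountBefore_toSYT hsort hb

theorem IsRunLabelling.apply_add_one (hT : IsRunLabelling pos T) {p : ↥(skewCells beta [])}
    {b : Fin (skewCells (k :: conj beta) []).card} (hb : (pos b).1 = succTranspose p) :
    (T p : ℕ) + 1 = rowCountBefore pos 0 b := by
  rw [hT b (by simp [hb]), hb, lamLabel_succTranspose]

theorem IsRunLabelling.unique (hsort : beta.Pairwise (· ≥ ·)) (hpos : Surjective pos)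
    (hT : IsRunLabelling pos T) (hT' : IsRunLabelling pos T') : T = T' := by
  funext p
  obtain ⟨b, hb⟩ := hpos ⟨_, succTranspose_mem hsort p⟩
  have h := (hT.apply_add_one (congrArg Subtype.val hb)).trans
    (hT'.apply_add_one (congrArg Subtype.val hb)).symm
  exact Fin.ext (by omega)

theorem exists_isRunLabelling (hsort : beta.Pairwise (· ≥ ·))
    (hsyt : IsSYT (k :: conj beta) [] pos) (hmd : IsMaxDescent pos) :
    ∃ T, IsRunLabelling pos T := by
  let e := Equiv.ofBijective pos hsyt.bijective
  have hrow (p : ↥(skewCells beta [])) :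
      (pos (e.symm ⟨_, succTranspose_mem hsort p⟩)).1.1 ≠ 0 := by
    simp [show pos (e.symm _) = _ from e.apply_symm_apply _]
  refine ⟨fun p => ⟨rowCountBefore pos 0 (e.symm ⟨_, succTranspose_mem hsort p⟩) - 1, ?_⟩,
    fun b hb => ?_⟩
  · have := rowCountBefore_le hsyt.bijective 0 (e.symm ⟨_, succTranspose_mem hsort p⟩)
    rw [card_filter_lam_fst_eq_zero] at this
    have := hmd.one_le_rowCountBefore (hrow p)
    omega
  · have hp := mem_of_mem_lam hsort (pos b).2 hb
    have hsucc : succTranspose ((pos b).1.2, (pos b).1.1 - 1) = (pos b).1 :=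
      Prod.ext (by simp; omega) rfl
    have hb' : e.symm ⟨_, succTranspose_mem hsort ⟨_, hp⟩⟩ = b :=
      e.symm_apply_eq.mpr (Subtype.ext hsucc)
    rw [lamLabel_eq _ hsort (pos b).2 hb]
    simp only [hb']
    have := hmd.one_le_rowCountBefore hb
    omega

theorem IsRunLabelling.level_eq (hT : IsRunLabelling pos T) (hsyt : IsSYT (k :: conj beta) [] pos)
    (b : Fin (skewCells (k :: conj beta) []).card) :
    level T (pos b) = 2 * rowCountBefore pos 0 b + if (pos b).1.1 = 0 then 1 else 0 := by
  by_cases hb : (pos b).1.1 = 0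
  · have := hsyt.rowCountBefore_eq_col b
    rw [hb] at this
    simp only [level, if_pos hb, this]
  · simp only [level, if_neg hb, hT b hb]
    ring

theorem IsRunLabelling.strictMono_key (hT : IsRunLabelling pos T)
    (hsyt : IsSYT (k :: conj beta) [] pos) (hmd : IsMaxDescent pos) :
    StrictMono fun b => key T (pos b) := by
  intro a b hab
  have hmono := rowCountBefore_mono (pos := pos) 0 hab.le
  have hla := hT.level_eq hsyt a
  have hlb := hT.level_eq hsyt b
  by_cases ha : (pos a).1.1 = 0
  · rw [if_pos ha] at hla
    have := rowCountBefore_lt_of_le_of_lt ha le_rfl hab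
    exact key_lt_of_level_lt T (by split_ifs at hlb <;> omega)
  · rw [if_neg ha] at hla
    by_cases hb : (pos b).1.1 = 0
    · rw [if_pos hb] at hlb
      exact key_lt_of_level_lt T (by omega)
    · rw [if_neg hb] at hlb
      rcases hmono.lt_or_eq with hlt | heq
      · exact key_lt_of_level_lt T (by omega)
      · exact key_lt_key T (by omega)
          (Prod.Lex.toLex_lt_toLex.mpr (Or.inl (hmd.row_lt_of_rowCountBefore_eq hab hb heq)))

theorem IsRunLabelling.eq_toSYT (hT : IsRunLabelling pos T) (hsyt : IsSYT (k :: conj beta) [] pos)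
    (hmd : IsMaxDescent pos) : pos = toSYT T :=
  eq_sortedEnum _ _ (hT.strictMono_key hsyt hmd)

theorem IsRunLabelling.isSSYT (hsort : beta.Pairwise (· ≥ ·)) (hT : IsRunLabelling pos T)
    (hsyt : IsSYT (k :: conj beta) [] pos) (hmd : IsMaxDescent pos) : IsSSYT T := by
  have hindex (p : ↥(skewCells beta [])) : ∃ b, (pos b).1 = succTranspose p :=
    (hsyt.bijective.2 ⟨_, succTranspose_mem hsort p⟩).imp fun _ h => congrArg Subtype.val h
  refine ⟨fun p p' hrow hcol => ?_, fun p p' hcol hrow => ?_⟩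
  · obtain ⟨b, hb⟩ := hindex p
    obtain ⟨b', hb'⟩ := hindex p'
    rcases hcol.lt_or_eq with hcol | hcol
    · have hbb' : b < b' := hsyt.2.2 b b' (by simp [hb, hb', hrow]) (by simp [hb, hb', hcol])
      have := rowCountBefore_mono (pos := pos) 0 hbb'.le
      rw [Fin.le_def]
      have := hT.apply_add_one hb
      have := hT.apply_add_one hb'
      omega
    · rw [show p = p' from Subtype.ext (Prod.ext hrow hcol)]
  · obtain ⟨b, hb⟩ := hindex p
    obtain ⟨b', hb'⟩ := hindex p'
    have hbb' : b < b' := hsyt.2.1 b b' (by simp [hb, hb', hcol]) (by simp [hb, hb', hrow])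
    have hlt : rowCountBefore pos 0 b < rowCountBefore pos 0 b' := by
      refine (rowCountBefore_mono 0 hbb'.le).lt_of_ne fun heq => ?_
      have := hmd.row_lt_of_rowCountBefore_eq hbb' (by simp [hb']) heq
      simp [hb, hb', hcol] at this
    rw [Fin.lt_def]
    have := hT.apply_add_one hb
    have := hT.apply_add_one hb'
    omega

theorem IsRunLabelling.majStat_eq (hsort : beta.Pairwise (· ≥ ·)) (hT : IsRunLabelling pos T)
    (hsyt : IsSYT (k :: conj beta) [] pos) (hmd : IsMaxDescent pos) :
    majStat (k :: conj beta) [] pos = (beta.sum + 1).choose 2 + ∑ p, (T p : ℕ) := by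
  have hbij := hsyt.bijective
  have hD : #{b | (pos b).1.1 ≠ 0} = beta.sum := by
    rw [card_filter_comp_eq hbij (fun q => q.1 ≠ 0), card_filter_lam_fst_ne_zero hsort]
  have hlabels :
      ∑ b with (pos b).1.1 ≠ 0, rowCountBefore pos 0 b = ∑ p, (T p : ℕ) + beta.sum :=
    calc ∑ b with (pos b).1.1 ≠ 0, rowCountBefore pos 0 b
        = ∑ b with (pos b).1.1 ≠ 0, (lamLabel T (pos b) + 1) :=
          sum_congr rfl fun b hb => hT b (mem_filter.mp hb).2
      _ = ∑ q ∈ skewCells (k :: conj beta) [] with q.1 ≠ 0, (lamLabel T q + 1) :=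
          sum_filter_comp_eq hbij (fun q => q.1 ≠ 0) (fun q => lamLabel T q + 1)
      _ = ∑ p ∈ skewCells beta [], (lamLabel T (succTranspose p) + 1) := by
          rw [filter_lam_fst_ne_zero hsort, sum_map]
      _ = ∑ p, ((T p : ℕ) + 1) := by
          rw [← sum_coe_sort]
          simp only [lamLabel_succTranspose]
      _ = ∑ p, (T p : ℕ) + beta.sum := by
          rw [sum_add_distrib, sum_const, card_univ, Fintype.card_coe, card_skewCells_nil,
            smul_eq_mul, mul_one]
  have hbefore :
      ∑ b with (pos b).1.1 ≠ 0, #{a | a < b ∧ (pos a).1.1 ≠ 0} = beta.sum.choose 2 := by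
    rw [← hD, ← sum_card_filter_lt]
    refine sum_congr rfl fun b _ => ?_
    rw [filter_filter]
    simp only [and_comm]
  rw [hmd.majStat_eq, sum_congr rfl fun b _ => val_eq_rowCountBefore_add b, sum_add_distrib,
    hlabels, hbefore, Nat.choose_succ_succ', Nat.choose_one_right]
  ring

end RunLabelling

theorem stmt13_general (beta : List ℕ) (hsort : List.Pairwise (· ≥ ·) beta)
    (k : ℕ) (hk : beta.length ≤ k) :
    X ^ ((beta.sum + 1).choose 2) * schurSpec beta k = fPoly (k :: conj beta) beta.sum := by
  rw [schurSpec, fPoly, fSkew, mul_sum]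
  refine sum_bij (fun T _ => toSYT T) (fun T hT => ?_) (fun T _ T' _ h => ?_) (fun pos hpos => ?_)
    (fun T hT => ?_)
  · have hsyt := isSYT_toSYT hsort (mem_filter.mp hT).2
    refine mem_filter.mpr ⟨mem_filter.mpr ⟨mem_univ _, hsyt⟩, ?_⟩
    exact (desStat_eq_sum_iff hsort hsyt).mpr (isMaxDescent_toSYT hsort hk (mem_filter.mp hT).2)
  · have hT' : IsRunLabelling (toSYT T) T' := h ▸ isRunLabelling_toSYT hsort
    exact (isRunLabelling_toSYT hsort).unique hsort (bijective_sortedEnum _ _).2 hT'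
  · obtain ⟨hmem, hdes⟩ := mem_filter.mp hpos
    have hsyt : IsSYT (k :: conj beta) [] pos := (mem_filter.mp hmem).2
    have hmd := (desStat_eq_sum_iff hsort hsyt).mp hdes
    obtain ⟨T, hT⟩ := exists_isRunLabelling hsort hsyt hmd
    exact ⟨T, mem_filter.mpr ⟨mem_univ _, hT.isSSYT hsort hsyt hmd⟩,
      (hT.eq_toSYT hsyt hmd).symm⟩
  · have hT : IsSSYT T := (mem_filter.mp hT).2
    rw [(isRunLabelling_toSYT hsort).majStat_eq hsort (isSYT_toSYT hsort hT)
      (isMaxDescent_toSYT hsort hk hT), pow_add]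

/-- Let `β` be a partition and `k` an integer at least the number of
parts of `β`.  Let `λ = (k, β'_1, β'_2, …)` be obtained by prepending `k` to the
conjugate partition `β'`.  Then
`q^{binom(|β|+1, 2)} · s_β(1, q, …, q^{k-1}) = f_{λ, |β|}(q)`. -/
theorem stmt13 (beta : List ℕ) (hsort : List.Pairwise (· ≥ ·) beta)
    (hpos : ∀ x ∈ beta, 0 < x) (k : ℕ) (hk : beta.length ≤ k) :
    X ^ ((beta.sum + 1).choose 2) * schurSpec beta k = fPoly (k :: conj beta) beta.sum :=
  stmt13_general beta hsort k hk
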